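/- In su(3) with the chain h = Δ_{p,q}u(1) = span{i(p F_{11} + q F_{22} − (p+q) F_{33})} ⊂ k = s(u(2)⊕u(1)) ⊂ su(3), with p, q coprime integers, p ≥ 0, and (p,q) ≠ (1,−1): the vectors X = E_{12} + E_{13} + E_{23} and Y = iF_{12} + i(F_{23} − F_{13}) satisfy [X,Y] = 0, while [E_{12}, iF_{12}] = 2i(F_{11} − F_{22}) has nonzero orthogonal projection onto m = k ⊖ h. Hence condition (*) fails for this chain. -/

import Mathlib

open Matrix

noncomputable section

/-- `E i j = e_{ij} - e_{ji}` in the complex `3 × 3` matrices (0-based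
indices: `E i j` corresponds to the paper's `E_{(i+1)(j+1)}`). -/
def E (i j : Fin 3) : Matrix (Fin 3) (Fin 3) ℂ :=
  Matrix.single i j 1 - Matrix.single j i 1

/-- `F i j = e_{ij} + e_{ji}` for `i ≠ j`, and `F j j = e_{jj}`. -/
def F (i j : Fin 3) : Matrix (Fin 3) (Fin 3) ℂ :=
  if i = j then Matrix.single i i 1
  else Matrix.single i j 1 + Matrix.single j i 1

/-- The biinvariant inner product `⟨A,B⟩ = -Re tr(AB)`. -/
def ip (A B : Matrix (Fin 3) (Fin 3) ℂ) : ℝ := - ((A * B).trace.re)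

/-- The associated norm. -/
def nrm (A : Matrix (Fin 3) (Fin 3) ℂ) : ℝ := Real.sqrt (ip A A)

/-- Orthogonal complement (over `ℝ`) with respect to `ip`. -/
def perp (W : Submodule ℝ (Matrix (Fin 3) (Fin 3) ℂ)) :
    Submodule ℝ (Matrix (Fin 3) (Fin 3) ℂ) where
  carrier := {v | ∀ w ∈ W, ip v w = 0}
  add_mem' := by
    intro a b ha hb w hw
    have h1 := ha w hw
    have h2 := hb w hw
    simp only [ip, Matrix.add_mul, Matrix.trace_add, Complex.add_re] at *
    linarith
  zero_mem' := by intro w hw; simp [ip]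
  smul_mem' := by
    intro c a ha w hw
    have h1 := ha w hw
    have h2 : ((a * w).trace).re = 0 := by simp only [ip] at h1; linarith
    simp [ip, smul_mul_assoc, Matrix.trace_smul, Complex.real_smul, h2]

/-- The Lie algebra `su(3)` of traceless skew-hermitian matrices, as a real
submodule. -/
def su3 : Submodule ℝ (Matrix (Fin 3) (Fin 3) ℂ) where
  carrier := {A | Aᴴ = -A ∧ A.trace = 0}
  add_mem' := by
    rintro a b ⟨ha1, ha2⟩ ⟨hb1, hb2⟩
    constructor
    · rw [Matrix.conjTranspose_add, ha1, hb1]; abel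
    · rw [Matrix.trace_add, ha2, hb2]; ring
  zero_mem' := by simp
  smul_mem' := by
    rintro c a ⟨h1, h2⟩
    constructor
    · rw [Matrix.conjTranspose_smul, h1]
      simp
    · rw [Matrix.trace_smul, h2, smul_zero]

/-- The subalgebra `k = s(u(2)⊕u(1))` of `su(3)`: matrices in `su(3)` whose
off-diagonal entries in the third row and column vanish. -/
def kSub : Submodule ℝ (Matrix (Fin 3) (Fin 3) ℂ) where
  carrier := {A | A ∈ su3 ∧ A 0 2 = 0 ∧ A 1 2 = 0 ∧ A 2 0 = 0 ∧ A 2 1 = 0}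
  add_mem' := by
    rintro a b ⟨ha, ha1, ha2, ha3, ha4⟩ ⟨hb, hb1, hb2, hb3, hb4⟩
    exact ⟨su3.add_mem ha hb, by simp [Matrix.add_apply, ha1, hb1],
      by simp [Matrix.add_apply, ha2, hb2], by simp [Matrix.add_apply, ha3, hb3],
      by simp [Matrix.add_apply, ha4, hb4]⟩
  zero_mem' := ⟨su3.zero_mem, by simp, by simp, by simp, by simp⟩
  smul_mem' := by
    rintro c a ⟨ha, ha1, ha2, ha3, ha4⟩
    exact ⟨su3.smul_mem c ha, by simp [Matrix.smul_apply, ha1],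
      by simp [Matrix.smul_apply, ha2], by simp [Matrix.smul_apply, ha3],
      by simp [Matrix.smul_apply, ha4]⟩

/-- `P` is the orthogonal projection onto `m` with respect to `ip`. -/
def IsOrthProj (m : Submodule ℝ (Matrix (Fin 3) (Fin 3) ℂ))
    (P : Matrix (Fin 3) (Fin 3) ℂ →ₗ[ℝ] Matrix (Fin 3) (Fin 3) ℂ) : Prop :=
  (∀ v, P v ∈ m) ∧ (∀ v ∈ m, P v = v) ∧ (∀ v, v - P v ∈ perp m)

/-- Condition (*) of Schwachhöfer–Tapp: there is `C > 0` with
`‖[Xᵐ,Yᵐ]ᵐ‖ ≤ C‖[X,Y]‖` for all `X, Y ∈ m ⊕ s`. -/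
def CondStar (m s : Submodule ℝ (Matrix (Fin 3) (Fin 3) ℂ))
    (P : Matrix (Fin 3) (Fin 3) ℂ →ₗ[ℝ] Matrix (Fin 3) (Fin 3) ℂ) : Prop :=
  ∃ C > 0, ∀ X Y, X ∈ m ⊔ s → Y ∈ m ⊔ s →
    nrm (P ⁅P X, P Y⁆) ≤ C * nrm ⁅X, Y⁆

open Matrix Complex

abbrev M3 := Matrix (Fin 3) (Fin 3) ℂ

def Zm : M3 := (2 : ℂ) • Complex.I • (F 0 0 - F 1 1)
def wm (p q : ℤ) : M3 :=
  Complex.I • ((p : ℂ) • F 0 0 + (q : ℂ) • F 1 1 - ((p : ℂ) + (q : ℂ)) • F 2 2)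


lemma ipZZ : ip Zm Zm = 8 := by
  simp [Zm, ip, F, Matrix.trace, Matrix.mul_apply, Fin.sum_univ_three, Matrix.single,
    Matrix.sub_apply, Matrix.add_apply, Matrix.smul_apply, Matrix.diag]
  ring

lemma ipww (p q : ℤ) : ip (wm p q) (wm p q)
    = (p:ℝ)^2 + (q:ℝ)^2 + ((p:ℝ)+(q:ℝ))^2 := by
  simp [wm, ip, F, Matrix.trace, Matrix.mul_apply, Fin.sum_univ_three, Matrix.single,
    Matrix.sub_apply, Matrix.add_apply, Matrix.smul_apply, Matrix.diag]
  ring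

lemma ip_sub_left (A B C : M3) : ip (A - B) C = ip A C - ip B C := by
  simp [ip, Matrix.sub_mul]; ring

lemma ip_smul_left (a : ℝ) (A B : M3) : ip (a • A) B = a * ip A B := by
  simp [ip, Matrix.smul_mul, Matrix.trace_smul]

lemma ip_smul_right (a : ℝ) (A B : M3) : ip A (a • B) = a * ip A B := by
  simp [ip, Matrix.mul_smul, Matrix.trace_smul]

lemma ip_sub_right (A B C : M3) : ip A (B - C) = ip A B - ip A C := by
  simp [ip, Matrix.mul_sub]; ring


lemma ip_self_expand (u : M3) (hu : uᴴ = -u) :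
    ip u u = ∑ i : Fin 3, ∑ j : Fin 3, Complex.normSq (u i j) := by
  have key : ∀ i j : Fin 3, (u i j * u j i).re = - Complex.normSq (u i j) := by
    intro i j
    have h1 : u j i = -(starRingEnd ℂ) (u i j) := by
      have h2 := congrArg (fun A : M3 => A i j) hu
      simp only [Matrix.conjTranspose_apply, Matrix.neg_apply] at h2
      have h3 := congrArg (starRingEnd ℂ) h2
      simpa using h3
    rw [h1]
    simp [Complex.mul_conj]
  simp only [ip, Matrix.trace, Matrix.diag, Matrix.mul_apply, Fin.sum_univ_three,
    Complex.add_re, key]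
  ring

lemma ip_self_nonneg (u : M3) (hu : uᴴ = -u) : 0 ≤ ip u u := by
  rw [ip_self_expand u hu]
  exact Finset.sum_nonneg fun _ _ => Finset.sum_nonneg fun _ _ => Complex.normSq_nonneg _

lemma ip_self_eq_zero (u : M3) (hu : uᴴ = -u) (h0 : ip u u = 0) : u = 0 := by
  rw [ip_self_expand u hu] at h0
  have hz : ∀ i j : Fin 3, Complex.normSq (u i j) = 0 := by
    intro i j
    refine le_antisymm ?_ (Complex.normSq_nonneg _)
    calc Complex.normSq (u i j) ≤ ∑ j' : Fin 3, Complex.normSq (u i j') :=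
          Finset.single_le_sum (fun _ _ => Complex.normSq_nonneg _) (Finset.mem_univ j)
      _ ≤ ∑ i' : Fin 3, ∑ j' : Fin 3, Complex.normSq (u i' j') :=
          Finset.single_le_sum
            (fun _ _ => Finset.sum_nonneg fun _ _ => Complex.normSq_nonneg _)
            (Finset.mem_univ i)
      _ = 0 := h0
  ext i j
  simpa using Complex.normSq_eq_zero.mp (hz i j)

lemma ip_self_pos (u : M3) (hu : uᴴ = -u) (hne : u ≠ 0) : 0 < ip u u :=
  lt_of_le_of_ne (ip_self_nonneg u hu) (fun h0 => hne (ip_self_eq_zero u hu h0.symm))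

lemma mem_kSub_explicit (A : M3) (h1 : Aᴴ = -A) (h2 : A.trace = 0)
    (h3 : A 0 2 = 0) (h4 : A 1 2 = 0) (h5 : A 2 0 = 0) (h6 : A 2 1 = 0) :
    A ∈ kSub := ⟨⟨h1, h2⟩, h3, h4, h5, h6⟩

lemma Zm_mem_kSub : Zm ∈ kSub := by
  refine mem_kSub_explicit _ ?_ ?_ ?_ ?_ ?_ ?_ <;>
  · first
    | (ext i j; fin_cases i <;> fin_cases j <;>
        simp [Zm, F, Matrix.single, Matrix.conjTranspose_apply, Complex.ext_iff])
    | simp [Zm, F, Matrix.trace, Matrix.diag, Fin.sum_univ_three, Matrix.single]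

lemma wm_mem_kSub (p q : ℤ) : wm p q ∈ kSub := by
  refine mem_kSub_explicit _ ?_ ?_ ?_ ?_ ?_ ?_ <;>
  · first
    | (ext i j; fin_cases i <;> fin_cases j <;>
        simp [wm, F, Matrix.single, Matrix.conjTranspose_apply, Complex.ext_iff])
    | (simp only [wm]; simp [F, Matrix.trace, Matrix.diag, Fin.sum_univ_three,
        Matrix.single]; ring)
    | simp [wm, F, Matrix.single]

lemma E01_mem_kSub : E 0 1 ∈ kSub := by
  refine mem_kSub_explicit _ ?_ ?_ ?_ ?_ ?_ ?_
  · ext i j; fin_cases i <;> fin_cases j <;>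
      simp [E, Matrix.single, Matrix.conjTranspose_apply, Complex.ext_iff]
  · rw [E, Matrix.trace_sub, Matrix.trace_single_eq_of_ne 0 1 (1:ℂ) (by decide),
      Matrix.trace_single_eq_of_ne 1 0 (1:ℂ) (by decide), sub_zero]
  all_goals simp [E, Matrix.single]

lemma iF01_mem_kSub : Complex.I • F 0 1 ∈ kSub := by
  refine mem_kSub_explicit _ ?_ ?_ ?_ ?_ ?_ ?_
  · ext i j; fin_cases i <;> fin_cases j <;>
      simp [F, Matrix.single, Matrix.conjTranspose_apply, Complex.ext_iff]
  · simp [F, Matrix.trace, Matrix.diag, Fin.sum_univ_three, Matrix.single]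
  all_goals simp [F, Matrix.single]

lemma mem_perp_span (w0 v : M3) (hv : ip v w0 = 0) :
    v ∈ perp (Submodule.span ℝ {w0}) := by
  intro u hu
  obtain ⟨a, rfl⟩ := Submodule.mem_span_singleton.mp hu
  rw [ip_smul_right, hv, mul_zero]

lemma ip_E01_wm (p q : ℤ) : ip (E 0 1) (wm p q) = 0 := by
  simp [ip, E, wm, F, Matrix.trace, Matrix.mul_apply, Fin.sum_univ_three,
    Matrix.single, Matrix.diag]

lemma ip_iF01_wm (p q : ℤ) : ip (Complex.I • F 0 1) (wm p q) = 0 := by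
  simp [ip, wm, F, Matrix.trace, Matrix.mul_apply, Fin.sum_univ_three,
    Matrix.single, Matrix.diag]

def Am : M3 := E 0 2 + E 1 2
def Bm : M3 := Complex.I • (F 1 2 - F 0 2)

lemma Am_mem_su3 : Am ∈ su3 := by
  constructor
  · ext i j; fin_cases i <;> fin_cases j <;>
      simp [Am, E, Matrix.single, Matrix.conjTranspose_apply, Complex.ext_iff]
  · simp [Am, E, Matrix.trace, Matrix.diag, Fin.sum_univ_three, Matrix.single]

lemma Bm_mem_su3 : Bm ∈ su3 := by
  constructor
  · ext i j; fin_cases i <;> fin_cases j <;>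
      simp [Bm, F, Matrix.single, Matrix.conjTranspose_apply, Complex.ext_iff]
  · simp [Bm, F, Matrix.trace, Matrix.diag, Fin.sum_univ_three, Matrix.single]

lemma Am_mem_perp : Am ∈ perp kSub := by
  rintro u ⟨_, h3, h4, h5, h6⟩
  simp [ip, Am, E, Matrix.trace, Matrix.mul_apply, Fin.sum_univ_three,
    Matrix.single, Matrix.diag, h3, h4, h5, h6]

lemma Bm_mem_perp : Bm ∈ perp kSub := by
  rintro u ⟨_, h3, h4, h5, h6⟩
  simp [ip, Bm, F, Matrix.trace, Matrix.mul_apply, Fin.sum_univ_three,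
    Matrix.single, Matrix.diag, h3, h4, h5, h6]

lemma ipZw (p q : ℤ) : ip Zm (wm p q) = 2*(p:ℝ) - 2*q := by
  simp [Zm, wm, ip, F, Matrix.trace, Matrix.mul_apply, Fin.sum_univ_three,
    Matrix.single, Matrix.diag]
  ring

lemma bracket1 : (⁅E 0 1 + (E 0 2 + E 1 2),
    Complex.I • F 0 1 + Complex.I • (F 1 2 - F 0 2)⁆ : Matrix (Fin 3) (Fin 3) ℂ) = 0 := by
  ext i j
  fin_cases i <;> fin_cases j <;>
    simp [Ring.lie_def, E, F, Matrix.mul_apply, Fin.sum_univ_three,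
      Matrix.single, Matrix.sub_apply, Matrix.add_apply, Matrix.smul_apply]

lemma bracket2 : (⁅E 0 1, Complex.I • F 0 1⁆ : Matrix (Fin 3) (Fin 3) ℂ)
    = (2 : ℂ) • Complex.I • (F 0 0 - F 1 1) := by
  ext i j
  fin_cases i <;> fin_cases j <;>
    simp [Ring.lie_def, E, F, Matrix.mul_apply, Fin.sum_univ_three,
      Matrix.single, Matrix.sub_apply, Matrix.add_apply, Matrix.smul_apply] <;> ring


set_option maxHeartbeats 1000000 in
/-- In `su(3)` with the chain `h = Δ_{p,q}u(1) = span{i(pF₁₁+qF₂₂−(p+q)F₃₃)}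
⊂ k = s(u(2)⊕u(1)) ⊂ su(3)`, with `p, q` coprime, `p ≥ 0` and
`(p,q) ≠ (1,−1)`: the vectors `X = E₁₂ + E₁₃ + E₂₃` and
`Y = iF₁₂ + i(F₂₃ − F₁₃)` commute, while `[E₁₂, iF₁₂] = 2i(F₁₁ − F₂₂)` has
nonzero orthogonal projection onto `m = k ⊖ h`.  Hence condition (*) fails for
this chain. -/
theorem stmt5 (p q : ℤ) (hcop : IsCoprime p q) (hp : 0 ≤ p)
    (hpq : (p, q) ≠ (1, -1))
    (h m s : Submodule ℝ (Matrix (Fin 3) (Fin 3) ℂ))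
    (hh : h = Submodule.span ℝ
      {Complex.I • ((p : ℂ) • F 0 0 + (q : ℂ) • F 1 1 - ((p : ℂ) + (q : ℂ)) • F 2 2)})
    (hm : m = kSub ⊓ perp h) (hs : s = su3 ⊓ perp kSub)
    (P : Matrix (Fin 3) (Fin 3) ℂ →ₗ[ℝ] Matrix (Fin 3) (Fin 3) ℂ)
    (hP : IsOrthProj m P) :
    (⁅E 0 1 + (E 0 2 + E 1 2), Complex.I • F 0 1 + Complex.I • (F 1 2 - F 0 2)⁆ :
      Matrix (Fin 3) (Fin 3) ℂ) = 0 ∧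
    (⁅E 0 1, Complex.I • F 0 1⁆ : Matrix (Fin 3) (Fin 3) ℂ)
      = (2 : ℂ) • Complex.I • (F 0 0 - F 1 1) ∧
    P ((2 : ℂ) • Complex.I • (F 0 0 - F 1 1)) ≠ 0 ∧
    ¬ CondStar m s P := by
  obtain ⟨hP1, hP2, hP3⟩ := hP
  -- p + q ≠ 0
  have hpq0 : p + q ≠ 0 := by
    intro h0
    have hq : q = -p := by omega
    subst hq
    obtain ⟨a, b, hab⟩ := hcop
    have hu : p * (a - b) = 1 := by ring_nf; ring_nf at hab; linarith
    have := Int.isUnit_iff.mp (IsUnit.of_mul_eq_one _ hu)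
    rcases this with h1 | h1
    · exact hpq (by simp [h1])
    · omega
  have hpqR : ((p : ℝ) + q) ≠ 0 := by exact_mod_cast hpq0
  have hD : (0 : ℝ) < (p:ℝ)^2 + (q:ℝ)^2 + ((p:ℝ)+(q:ℝ))^2 := by
    have h1 : (0:ℝ) < ((p:ℝ)+q)^2 := by positivity
    nlinarith [sq_nonneg ((p:ℝ)), sq_nonneg ((q:ℝ))]
  set D : ℝ := (p:ℝ)^2 + (q:ℝ)^2 + ((p:ℝ)+(q:ℝ))^2 with hDdef
  -- part 1
  have part1 := bracket1
  -- part 2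
  have part2 := bracket2
  -- the element v = Z - c w lies in m
  set c : ℝ := (2*(p:ℝ) - 2*q) / D with hcdef
  set v : Matrix (Fin 3) (Fin 3) ℂ := Zm - c • wm p q with hvdef
  have hv_m : v ∈ m := by
    rw [hm]
    refine Submodule.mem_inf.mpr ⟨?_, ?_⟩
    · exact Submodule.sub_mem _ Zm_mem_kSub (Submodule.smul_mem _ _ (wm_mem_kSub p q))
    · rw [hh]
      refine mem_perp_span (wm p q) v ?_
      rw [hvdef, ip_sub_left, ip_smul_left, ipww]
      rw [ipZw, hcdef, ← hDdef]
      field_simp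
      ring
  -- m is contained in su3
  have hm_su3 : ∀ u ∈ m, uᴴ = -u := by
    intro u hu
    rw [hm] at hu
    exact (Submodule.mem_inf.mp hu).1.1.1
  -- part 3
  have part3 : P ((2 : ℂ) • Complex.I • (F 0 0 - F 1 1)) ≠ 0 := by
    intro hPZ
    have hZperp : Zm ∈ perp m := by
      have := hP3 Zm
      rw [show P Zm = 0 from hPZ, sub_zero] at this
      exact this
    have h0 := hZperp v hv_m
    rw [hvdef, ip_sub_right, ip_smul_right] at h0
    rw [ipZZ] at h0
    rw [ipZw, hcdef] at h0
    have key : 8 * D - (2*(p:ℝ) - 2*q) * (2*(p:ℝ) - 2*q) = 12 * ((p:ℝ)+q)^2 := by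
      rw [hDdef]; ring
    have h12 : (0:ℝ) < 12 * ((p:ℝ)+q)^2 := by positivity
    have : 8 - (2*(p:ℝ) - 2*q) / D * (2*(p:ℝ) - 2*q) = (12 * ((p:ℝ)+q)^2) / D := by
      field_simp
      linarith [key]
    rw [this] at h0
    have : (0:ℝ) < (12 * ((p:ℝ)+q)^2) / D := by positivity
    linarith
  -- P kills perp m
  have hPzero : ∀ u, u ∈ perp m → P u = 0 := by
    intro u hu
    have h1 : u - P u ∈ perp m := hP3 u
    have h2 : P u ∈ perp m := by
      have := Submodule.sub_mem (perp m) hu h1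
      simpa using this
    have h3 : ip (P u) (P u) = 0 := h2 (P u) (hP1 u)
    exact ip_self_eq_zero _ (hm_su3 _ (hP1 u)) h3
  refine ⟨part1, part2, part3, ?_⟩
  -- condition (*) fails
  rintro ⟨C, hC, hCS⟩
  have hE01m : E 0 1 ∈ m := by
    rw [hm]
    exact Submodule.mem_inf.mpr ⟨E01_mem_kSub, by rw [hh]; exact mem_perp_span _ _ (ip_E01_wm p q)⟩
  have hiF01m : Complex.I • F 0 1 ∈ m := by
    rw [hm]
    exact Submodule.mem_inf.mpr ⟨iF01_mem_kSub, by rw [hh]; exact mem_perp_span _ _ (ip_iF01_wm p q)⟩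
  have hAms : Am ∈ s := by rw [hs]; exact Submodule.mem_inf.mpr ⟨Am_mem_su3, Am_mem_perp⟩
  have hBms : Bm ∈ s := by rw [hs]; exact Submodule.mem_inf.mpr ⟨Bm_mem_su3, Bm_mem_perp⟩
  have hX : E 0 1 + (E 0 2 + E 1 2) ∈ m ⊔ s :=
    Submodule.add_mem _ (Submodule.mem_sup_left hE01m) (Submodule.mem_sup_right hAms)
  have hY : Complex.I • F 0 1 + Complex.I • (F 1 2 - F 0 2) ∈ m ⊔ s :=
    Submodule.add_mem _ (Submodule.mem_sup_left hiF01m) (Submodule.mem_sup_right hBms)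
  have spec := hCS _ _ hX hY
  -- perp membership of Am, Bm in perp m
  have hm_le_k : ∀ u ∈ m, u ∈ kSub := by
    intro u hu; rw [hm] at hu; exact (Submodule.mem_inf.mp hu).1
  have hAmperp : Am ∈ perp m := fun u hu => Am_mem_perp u (hm_le_k u hu)
  have hBmperp : Bm ∈ perp m := fun u hu => Bm_mem_perp u (hm_le_k u hu)
  have hPX : P (E 0 1 + (E 0 2 + E 1 2)) = E 0 1 := by
    rw [show E 0 2 + E 1 2 = Am from rfl, map_add, hP2 _ hE01m, hPzero _ hAmperp, add_zero]
  have hPY : P (Complex.I • F 0 1 + Complex.I • (F 1 2 - F 0 2)) = Complex.I • F 0 1 := by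
    rw [show Complex.I • (F 1 2 - F 0 2) = Bm from rfl, map_add, hP2 _ hiF01m,
      hPzero _ hBmperp, add_zero]
  rw [hPX, hPY, part1, part2] at spec
  have hnrm0 : nrm (0 : Matrix (Fin 3) (Fin 3) ℂ) = 0 := by
    simp [nrm, ip]
  rw [hnrm0, mul_zero] at spec
  have hpos : 0 < nrm (P ((2 : ℂ) • Complex.I • (F 0 0 - F 1 1))) := by
    rw [nrm]
    apply Real.sqrt_pos.mpr
    exact ip_self_pos _ (hm_su3 _ (hP1 _)) part3
  linarith
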